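/- arXiv:2012.10341 — 3 statements merged into one kernel-verified Lean document; each statement's English description precedes it below -/
import Mathlib

section
/- Let n ≥ 1 and let C_{4n} be the cycle with vertices v_1, v_2, …, v_{4n} in cyclic order. Define f by: f(v_i) = (i−1)/2 if i is odd; f(v_i) = 4n + 1 − i/2 if i is even and i ≤ 2n; f(v_i) = 4n − i/2 if i is even and i > 2n. Then f is a graceful labelling of C_{4n}; in particular, every cycle C_{4n} is graceful. -/
/-- The edge label induced by a vertex labelling `f`: the absolute difference of the
labels of the two endpoints. -/
def edgeLabel {V : Type*} (f : V → ℕ) : Sym2 V → ℕ :=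
  Sym2.lift ⟨fun u v => Nat.dist (f u) (f v), fun u v => Nat.dist_comm (f u) (f v)⟩

/-- `f` is a graceful labelling of the graph `G` with `m` edges: `f` is an injective
map into `{0,…,m}` and the induced edge labelling is a bijection from the edge set
onto `{1,…,m}`. -/
def IsGraceful {V : Type*} (G : SimpleGraph V) (m : ℕ) (f : V → ℕ) : Prop :=
  Function.Injective f ∧ (∀ v, f v ≤ m) ∧
    Set.InjOn (edgeLabel f) G.edgeSet ∧
    edgeLabel f '' G.edgeSet = Set.Icc 1 m

/-- `f` is a near graceful labelling of the graph `G` with `m` edges: `f` is an injective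
map into `{0,…,m+1}` and the induced edge labelling is a bijection from the edge set
onto `{1,…,m-1,m}` or onto `{1,…,m-1,m+1}`. -/
def IsNearGraceful {V : Type*} (G : SimpleGraph V) (m : ℕ) (f : V → ℕ) : Prop :=
  Function.Injective f ∧ (∀ v, f v ≤ m + 1) ∧
    Set.InjOn (edgeLabel f) G.edgeSet ∧
    (edgeLabel f '' G.edgeSet = Set.Icc 1 m ∨
      edgeLabel f '' G.edgeSet = Set.Icc 1 (m + 1) \ {m})
/-- The cycle graph of length `t`, on vertex set `ZMod t`, consecutive residues adjacent. -/
def cycleG (t : ℕ) : SimpleGraph (ZMod t) where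
  Adj x y := x ≠ y ∧ (y = x + 1 ∨ x = y + 1)
  symm := ⟨fun _ _ h => ⟨h.1.symm, h.2.symm⟩⟩
  loopless := ⟨fun _ h => h.1 rfl⟩

/-! Along the cycle the labels alternate between the small values `0, 1, 2, …`
and the large values `4n, 4n - 1, …`, with the large values skipping `3n` once the
walk passes the half-way vertex `v_{2n}`. The edges `v_i v_{i+1}` then receive the labels
`4n, 4n - 1, …, 2n + 1` for `i ≤ 2n`, the closing edge `v_{4n} v_1` receives `2n`, and the
remaining edges receive `2n - 1, …, 1`. -/

theorem cycleG_edgeSet {t : ℕ} [Fact (1 < t)] :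
    (cycleG t).edgeSet = Set.range fun x : ZMod t => s(x, x + 1) := by
  ext e
  induction e using Sym2.ind with
  | _ u v =>
    simp only [SimpleGraph.mem_edgeSet, cycleG, Set.mem_range, Sym2.eq_iff]
    constructor
    · rintro ⟨-, rfl | rfl⟩
      · exact ⟨u, .inl ⟨rfl, rfl⟩⟩
      · exact ⟨v, .inr ⟨rfl, rfl⟩⟩
    · rintro ⟨x, ⟨rfl, rfl⟩ | ⟨rfl, rfl⟩⟩
      · exact ⟨by simp, .inl rfl⟩
      · exact ⟨by simp, .inr rfl⟩

theorem isGraceful_cycleG {t : ℕ} [Fact (1 < t)] {f : ZMod t → ℕ}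
    (hf : Function.Injective f) (hft : ∀ v, f v ≤ t)
    (he : Set.BijOn (fun x => edgeLabel f s(x, x + 1)) Set.univ (Set.Icc 1 t)) :
    IsGraceful (cycleG t) t f := by
  refine ⟨hf, hft, ?_, ?_⟩
  · rw [cycleG_edgeSet]
    rintro _ ⟨x, rfl⟩ _ ⟨y, rfl⟩ hxy
    rw [he.injOn (Set.mem_univ x) (Set.mem_univ y) hxy]
  · rw [cycleG_edgeSet, ← Set.range_comp', ← Set.image_univ]
    exact he.image_eq

theorem ZMod.bijOn_val (t : ℕ) [NeZero t] :
    Set.BijOn ZMod.val (Set.univ : Set (ZMod t)) (Set.Iio t) :=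
  ⟨fun x _ => ZMod.val_lt x, (ZMod.val_injective t).injOn,
    fun j hj => ⟨j, Set.mem_univ _, ZMod.val_cast_of_lt hj⟩⟩

theorem isGraceful_cycleG_of_val {t : ℕ} [Fact (1 < t)] {f : ZMod t → ℕ} {g e : ℕ → ℕ}
    (hfg : ∀ x, f x = g x.val) (hg : Set.InjOn g (Set.Iio t))
    (hgt : Set.MapsTo g (Set.Iio t) (Set.Iic t))
    (hge : ∀ j < t, Nat.dist (g j) (g ((j + 1) % t)) = e j)
    (he : Set.BijOn e (Set.Iio t) (Set.Icc 1 t)) :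
    IsGraceful (cycleG t) t f := by
  have hval := ZMod.bijOn_val t
  have hf : f = g ∘ ZMod.val := funext hfg
  subst hf
  refine isGraceful_cycleG (Set.injOn_univ.mp (hg.comp hval.injOn hval.mapsTo))
    (fun x => hgt (hval.mapsTo (Set.mem_univ x))) ?_
  have hedge : (fun x : ZMod t => edgeLabel (g ∘ ZMod.val) s(x, x + 1)) = e ∘ ZMod.val := by
    funext x
    rw [Function.comp_apply, ← hge _ (ZMod.val_lt x), ← ZMod.val_one t, ← ZMod.val_add]
    rfl
  rw [hedge]
  exact he.comp hval

namespace Rosa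

/-- Rosa's labelling of the vertex `v_{j+1}` of `C_{4n}`. -/
def label (n j : ℕ) : ℕ :=
  if j % 2 = 0 then j / 2
  else if j < 2 * n then 4 * n + 1 - (j + 1) / 2
  else 4 * n - (j + 1) / 2

/-- The label of the edge `v_{j+1} v_{j+2}` (indices mod `4n`) under `label n`. -/
def edgeLabelAt (n j : ℕ) : ℕ :=
  if j < 2 * n then 4 * n - j
  else if j = 4 * n - 1 then 2 * n
  else 4 * n - 1 - j

theorem label_injOn (n : ℕ) : Set.InjOn (label n) (Set.Iio (4 * n)) := by
  intro a ha b hb h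
  simp only [Set.mem_Iio] at ha hb
  unfold label at h
  split_ifs at h <;> omega

theorem label_mapsTo (n : ℕ) : Set.MapsTo (label n) (Set.Iio (4 * n)) (Set.Iic (4 * n)) := by
  intro j hj
  simp only [Set.mem_Iio, Set.mem_Iic] at hj ⊢
  unfold label
  split_ifs <;> omega

theorem dist_label_succ {n j : ℕ} (hj : j < 4 * n) :
    Nat.dist (label n j) (label n ((j + 1) % (4 * n))) = edgeLabelAt n j := by
  unfold Nat.dist
  obtain hlt | heq := lt_or_eq_of_le (Nat.succ_le_of_lt hj)
  · rw [Nat.mod_eq_of_lt hlt]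
    unfold label edgeLabelAt
    split_ifs <;> omega
  · rw [← heq, Nat.mod_self]
    unfold label edgeLabelAt
    split_ifs <;> omega

theorem edgeLabelAt_bijOn {n : ℕ} (hn : 1 ≤ n) :
    Set.BijOn (edgeLabelAt n) (Set.Iio (4 * n)) (Set.Icc 1 (4 * n)) := by
  refine ⟨fun j hj => ?_, fun a ha b hb h => ?_, fun k hk => ?_⟩
  · simp only [Set.mem_Iio, Set.mem_Icc] at hj ⊢
    unfold edgeLabelAt
    split_ifs <;> omega
  · simp only [Set.mem_Iio] at ha hb
    unfold edgeLabelAt at h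
    split_ifs at h <;> omega
  · simp only [Set.mem_Icc, Set.mem_image, Set.mem_Iio] at hk ⊢
    obtain hk' | rfl | hk' := lt_trichotomy k (2 * n)
    · exact ⟨4 * n - 1 - k, by unfold edgeLabelAt; split_ifs <;> omega⟩
    · exact ⟨4 * n - 1, by unfold edgeLabelAt; split_ifs <;> omega⟩
    · exact ⟨4 * n - k, by unfold edgeLabelAt; split_ifs <;> omega⟩

end Rosa

/-- (Rosa) Let `n ≥ 1` and let `C_{4n}` be the cycle with vertices
`v_1, …, v_{4n}` in cyclic order (here vertex `v_i` is the residue `i - 1` in `ZMod (4n)`).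
Define `f(v_i) = (i-1)/2` if `i` is odd, `f(v_i) = 4n + 1 - i/2` if `i` is even and
`i ≤ 2n`, and `f(v_i) = 4n - i/2` if `i` is even and `i > 2n`.  Then `f` is a graceful
labelling of `C_{4n}`; in particular every cycle `C_{4n}` is graceful. -/
theorem stmt_3 (n : ℕ) (hn : 1 ≤ n) (f : ZMod (4 * n) → ℕ)
    (hf : ∀ i : ℕ, 1 ≤ i → i ≤ 4 * n →
      f ((i - 1 : ℕ) : ZMod (4 * n)) =
        if i % 2 = 1 then (i - 1) / 2
        else if i ≤ 2 * n then 4 * n + 1 - i / 2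
        else 4 * n - i / 2) :
    IsGraceful (cycleG (4 * n)) (4 * n) f ∧
      ∃ g : ZMod (4 * n) → ℕ, IsGraceful (cycleG (4 * n)) (4 * n) g := by
  have : Fact (1 < 4 * n) := ⟨by omega⟩
  have hlabel : ∀ x : ZMod (4 * n), f x = Rosa.label n x.val := by
    intro x
    have hx := ZMod.val_lt x
    have h := hf (x.val + 1) (by omega) (by omega)
    rw [Nat.add_sub_cancel, ZMod.natCast_zmod_val] at h
    rw [h, Rosa.label]
    split_ifs <;> omega
  have hgraceful : IsGraceful (cycleG (4 * n)) (4 * n) f :=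
    isGraceful_cycleG_of_val hlabel (Rosa.label_injOn n) (Rosa.label_mapsTo n)
      (fun _ => Rosa.dist_label_succ) (Rosa.edgeLabelAt_bijOn hn)
  exact ⟨hgraceful, f, hgraceful⟩
end

section
/- Fix n ≥ 1. If for every s ≥ 1 there exists a complete s,4n-useful cycle set, then for every k ≥ 1, every cyclic snake kC_{4n} (with any string) is graceful. -/
/-- Base adjacency for a chain of cycles: cycle `j` has length `c j`, and within each
cycle consecutive residues are adjacent. -/
def snakeBase (k : ℕ) (c : Fin k → ℕ) :
    (Σ j : Fin k, ZMod (c j)) → (Σ j : Fin k, ZMod (c j)) → Prop :=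
  fun p q => ∃ (j : Fin k) (x y : ZMod (c j)),
    p = ⟨j, x⟩ ∧ q = ⟨j, y⟩ ∧ (y = x + 1 ∨ x = y + 1)

theorem snakeBase_symm {k : ℕ} {c : Fin k → ℕ} :
    ∀ {p q}, snakeBase k c p q → snakeBase k c q p := by
  rintro p q ⟨j, x, y, rfl, rfl, h⟩
  exact ⟨j, y, x, rfl, rfl, h.symm⟩

/-- The gluing relation for a snake: for each `j` with `j + 1 < k`, the vertex of cycle `j`
at position `a j` is identified with the vertex of cycle `j+1` at position `0`. -/
def snakeGlue (k : ℕ) (c : Fin k → ℕ) (a : (j : Fin k) → ZMod (c j)) :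
    (Σ j : Fin k, ZMod (c j)) → (Σ j : Fin k, ZMod (c j)) → Prop :=
  fun p q => ∃ (j : ℕ) (hj : j + 1 < k),
    p = ⟨⟨j, Nat.lt_of_succ_lt hj⟩, a ⟨j, Nat.lt_of_succ_lt hj⟩⟩ ∧
    q = ⟨⟨j + 1, hj⟩, 0⟩

/-- The setoid on the disjoint union of the cycles generated by the gluing relation. -/
def snakeSetoid (k : ℕ) (c : Fin k → ℕ) (a : (j : Fin k) → ZMod (c j)) :
    Setoid (Σ j : Fin k, ZMod (c j)) :=
  Relation.EqvGen.setoid (snakeGlue k c a)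

/-- The snake graph: `k` cycles, cycle `j` of length `c j`, where cycle `j` and cycle `j+1`
are glued by identifying the vertex of cycle `j` at position `a j` with the vertex of
cycle `j+1` at position `0`. -/
def snakeGraph (k : ℕ) (c : Fin k → ℕ) (a : (j : Fin k) → ZMod (c j)) :
    SimpleGraph (Quotient (snakeSetoid k c a)) where
  Adj x y := x ≠ y ∧ ∃ p q, Quotient.mk (snakeSetoid k c a) p = x ∧
    Quotient.mk (snakeSetoid k c a) q = y ∧ snakeBase k c p q
  symm := by
    constructor
    rintro x y ⟨hxy, p, q, hp, hq, hb⟩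
    exact ⟨hxy.symm, q, p, hq, hp, snakeBase_symm hb⟩
  loopless := ⟨fun _ h => h.1 rfl⟩

/-- `G` is a cyclic snake `kCₙ`: `G` is isomorphic to a chain of `k` cycles of length `n`,
consecutive cycles glued at a vertex, where on each internal cycle the two cut vertices
are distinct (position `a j ≠ 0`). -/
def IsCyclicSnake {V : Type*} (G : SimpleGraph V) (k n : ℕ) : Prop :=
  ∃ a : Fin k → ZMod n,
    (∀ j : Fin k, 0 < j.val → j.val + 1 < k → a j ≠ 0) ∧
    Nonempty (G ≃g snakeGraph k (fun _ => n) a)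

/-- `G` is a cyclic snake `kCₙ` whose string is `(str 1, …, str (k-2))`: the `i`-th entry
of the string is the distance between the `i`-th and `(i+1)`-th cut vertices, which in the
concrete model is the cycle distance `min (a i).val (n - (a i).val)` between positions `0`
and `a i` on cycle `i`. -/
def IsCyclicSnakeWithString {V : Type*} (G : SimpleGraph V) (k n : ℕ) (str : ℕ → ℕ) : Prop :=
  ∃ a : Fin k → ZMod n,
    (∀ j : Fin k, 0 < j.val → j.val + 1 < k → a j ≠ 0) ∧
    (∀ j : Fin k, 0 < j.val → j.val + 1 < k →
      min (a j).val (n - (a j).val) = str j.val) ∧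
    Nonempty (G ≃g snakeGraph k (fun _ => n) a)
/-- An `s,t`-useful cycle with even distance `d`: an injective labelling of the cycle of
length `t` with values in `[0, t/2 - 1] ∪ [st - t/2, st]`, whose induced edge labels are
exactly the set `[st - t + 1, st]`, and in which a vertex labelled `0` and a vertex
labelled `t/2 - 1` are at distance `d`. -/
def IsUsefulEven (s t d : ℕ) (f : ZMod t → ℕ) : Prop :=
  Even d ∧ Function.Injective f ∧
    (∀ x, f x ∈ Set.Icc 0 (t / 2 - 1) ∪ Set.Icc (s * t - t / 2) (s * t)) ∧
    Set.InjOn (edgeLabel f) (cycleG t).edgeSet ∧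
    edgeLabel f '' (cycleG t).edgeSet = Set.Icc (s * t - t + 1) (s * t) ∧
    ∃ u v, f u = 0 ∧ f v = t / 2 - 1 ∧ (cycleG t).dist u v = d

/-- An `s,t`-odd useful cycle with odd distance `d`: an injective labelling of the cycle of
length `t` with values in `[0, t/2] ∪ [st - t/2 + 1, st]`, whose induced edge labels are
exactly the set `[st - t + 1, st]`, and in which a vertex labelled `0` and a vertex
labelled `st - t/2 + 1` are at distance `d`. -/
def IsUsefulOdd (s t d : ℕ) (f : ZMod t → ℕ) : Prop :=
  Odd d ∧ Function.Injective f ∧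
    (∀ x, f x ∈ Set.Icc 0 (t / 2) ∪ Set.Icc (s * t - t / 2 + 1) (s * t)) ∧
    Set.InjOn (edgeLabel f) (cycleG t).edgeSet ∧
    edgeLabel f '' (cycleG t).edgeSet = Set.Icc (s * t - t + 1) (s * t) ∧
    ∃ u v, f u = 0 ∧ f v = s * t - t / 2 + 1 ∧ (cycleG t).dist u v = d

/-- There is a complete `s,t`-useful cycle set: for every distance `d ∈ {1, …, t/2}` there
is an `s,t`-useful cycle (of even distance) or an `s,t`-odd useful cycle (of odd distance)
realising that distance. -/
def HasCompleteUsefulSet (s t : ℕ) : Prop :=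
  ∀ d, 1 ≤ d → d ≤ t / 2 →
    (∃ f, IsUsefulEven s t d f) ∨ (∃ f, IsUsefulOdd s t d f)

section Preliminaries

open SimpleGraph

lemma edgeLabel_mk {V : Type*} (f : V → ℕ) (u v : V) :
    edgeLabel f s(u, v) = Nat.dist (f u) (f v) := rfl

lemma edgeLabel_comp {V W : Type*} (g : W → ℕ) (h : V → W) (e : Sym2 V) :
    edgeLabel (g ∘ h) e = edgeLabel g (Sym2.map h e) := by
  induction e using Sym2.ind with
  | _ u v => rfl

lemma nat_dist_sub_sub (M a b : ℕ) (ha : a ≤ M) (hb : b ≤ M) :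
    Nat.dist (M - a) (M - b) = Nat.dist a b := by
  simp only [Nat.dist]; omega

variable {t : ℕ}

lemma zmod_one_ne_zero (ht : 2 < t) : (1 : ZMod t) ≠ 0 := by
  haveI : NeZero t := ⟨by omega⟩
  intro h
  have : ((1 : ℕ) : ZMod t) = 0 := by exact_mod_cast h
  rw [ZMod.natCast_eq_zero_iff] at this
  have := Nat.le_of_dvd one_pos this
  omega

lemma zmod_two_ne_zero (ht : 2 < t) : (2 : ZMod t) ≠ 0 := by
  haveI : NeZero t := ⟨by omega⟩
  intro h
  have : ((2 : ℕ) : ZMod t) = 0 := by exact_mod_cast h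
  rw [ZMod.natCast_eq_zero_iff] at this
  have := Nat.le_of_dvd (by norm_num) this
  omega

lemma zmod_succ_ne_self (ht : 2 < t) (x : ZMod t) : x + 1 ≠ x := by
  intro h
  have : (1 : ZMod t) = 0 := by
    have := congrArg (fun y => y - x) h
    simpa [add_comm] using this
  exact zmod_one_ne_zero ht this

lemma cycleG_adj_succ (ht : 2 < t) (x : ZMod t) : (cycleG t).Adj x (x + 1) :=
  ⟨fun h => zmod_succ_ne_self ht x h.symm, Or.inl rfl⟩

lemma cycleG_edge_iff (ht : 2 < t) {e : Sym2 (ZMod t)} :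
    e ∈ (cycleG t).edgeSet ↔ ∃ x, e = s(x, x + 1) := by
  induction e using Sym2.ind with
  | _ u v =>
    rw [SimpleGraph.mem_edgeSet]
    constructor
    · rintro ⟨hne, h | h⟩
      · exact ⟨u, by rw [h]⟩
      · exact ⟨v, by rw [h, Sym2.eq_swap]⟩
    · rintro ⟨x, hx⟩
      have : (cycleG t).Adj x (x + 1) := cycleG_adj_succ ht x
      rw [← SimpleGraph.mem_edgeSet] at this ⊢
      rwa [hx]

lemma succ_edge_inj (ht : 2 < t) {x y : ZMod t} (h : s(x, x + 1) = s(y, y + 1)) : x = y := by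
  rw [Sym2.eq_iff] at h
  rcases h with ⟨h1, _⟩ | ⟨h1, h2⟩
  · exact h1
  · exfalso
    apply zmod_two_ne_zero ht
    have h3 : y + 2 = y := by
      calc y + 2 = (y + 1) + 1 := by ring
        _ = x + 1 := by rw [h1]
        _ = y := h2
    linear_combination h3

lemma exists_cyc_walk (ht : 2 < t) (x : ZMod t) (r : ℕ) :
    ∃ w : (cycleG t).Walk x (x + (r : ZMod t)), w.length = r := by
  induction r generalizing x with
  | zero => exact ⟨SimpleGraph.Walk.nil.copy rfl (by simp), by simp⟩
  | succ r ih =>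
    obtain ⟨w, hw⟩ := ih (x + 1)
    refine ⟨(SimpleGraph.Walk.cons (cycleG_adj_succ ht x) w).copy rfl (by push_cast; ring), ?_⟩
    simp [hw]

lemma cyc_dist_le_val (ht : 2 < t) (u v : ZMod t) :
    (cycleG t).dist u v ≤ (v - u).val := by
  haveI : NeZero t := ⟨by omega⟩
  obtain ⟨w, hw⟩ := exists_cyc_walk ht u (v - u).val
  have : u + ((v - u).val : ZMod t) = v := by rw [ZMod.natCast_zmod_val]; ring
  have h2 := SimpleGraph.dist_le (w.copy rfl this)
  rwa [SimpleGraph.Walk.length_copy, hw] at h2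

lemma cyc_walk_diff {u v : ZMod t} (w : (cycleG t).Walk u v) :
    ∃ i j : ℕ, i + j = w.length ∧ v - u = (i : ZMod t) - (j : ZMod t) := by
  induction w with
  | nil => exact ⟨0, 0, rfl, by simp⟩
  | @cons x x' y h w ih =>
    obtain ⟨i, j, hij, hd⟩ := ih
    rcases h.2 with h1 | h1
    · refine ⟨i + 1, j, by simp [SimpleGraph.Walk.length_cons]; omega, ?_⟩
      have : y - x = (y - x') + 1 := by rw [h1]; ring
      rw [this, hd]; push_cast; ring
    · refine ⟨i, j + 1, by simp [SimpleGraph.Walk.length_cons]; omega, ?_⟩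
      have : y - x = (y - x') - 1 := by rw [h1]; ring
      rw [this, hd]; push_cast; ring

lemma cyc_dist_cases (ht : 2 < t) {u v : ZMod t} {d : ℕ}
    (hd : (cycleG t).dist u v = d) (hd1 : 1 ≤ d) (hd2 : 2 * d ≤ t) :
    v - u = (d : ZMod t) ∨ u - v = (d : ZMod t) := by
  haveI : NeZero t := ⟨by omega⟩
  have hreach : (cycleG t).Reachable u v := by
    obtain ⟨w, _⟩ := exists_cyc_walk ht u (v - u).val
    have : u + ((v - u).val : ZMod t) = v := by rw [ZMod.natCast_zmod_val]; ring
    rw [this] at w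
    exact ⟨w⟩
  obtain ⟨w, hw⟩ := hreach.exists_walk_length_eq_dist
  obtain ⟨i, j, hij, hdiff⟩ := cyc_walk_diff w
  rw [hw, hd] at hij
  have hle1 : d ≤ (v - u).val := hd ▸ cyc_dist_le_val ht u v
  have hle2 : d ≤ (u - v).val := by
    have := cyc_dist_le_val ht v u
    rwa [SimpleGraph.dist_comm, hd] at this
  rcases le_or_gt j i with hji | hji
  · left
    have he : v - u = ((i - j : ℕ) : ZMod t) := by
      rw [hdiff, Nat.cast_sub hji]
    have hval : (v - u).val = i - j := by
      rw [he, ZMod.val_cast_of_lt (by omega)]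
    have : i - j = d := by omega
    rw [he, this]
  · right
    have he : u - v = ((j - i : ℕ) : ZMod t) := by
      have : u - v = -(v - u) := by ring
      rw [this, hdiff, Nat.cast_sub (le_of_lt hji)]; ring
    have hval : (u - v).val = j - i := by
      rw [he, ZMod.val_cast_of_lt (by omega)]
    have : j - i = d := by omega
    rw [he, this]

lemma min_val_cases {a : ZMod t} {d : ℕ} (ht : 0 < t) (h : min a.val (t - a.val) = d) :
    a = (d : ZMod t) ∨ -a = (d : ZMod t) := by
  haveI : NeZero t := ⟨by omega⟩
  have hself : ((a.val : ℕ) : ZMod t) = a := ZMod.natCast_zmod_val a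
  rcases min_cases a.val (t - a.val) with ⟨h1, _⟩ | ⟨h1, _⟩
  · left
    have hd' : d = a.val := by omega
    rw [hd', hself]
  · right
    have hd' : d = t - a.val := by omega
    rw [hd', Nat.cast_sub (le_of_lt (ZMod.val_lt a)), ZMod.natCast_self, hself]
    ring

end Preliminaries

section Relabel

variable {t : ℕ}

lemma sym2_map_edgeSet (ht : 2 < t) {φ : ZMod t → ZMod t}
    (hfwd : ∀ x, Sym2.map φ s(x, x + 1) ∈ (cycleG t).edgeSet)
    (hbwd : ∀ y, ∃ x, Sym2.map φ s(x, x + 1) = s(y, y + 1)) :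
    Sym2.map φ '' (cycleG t).edgeSet = (cycleG t).edgeSet := by
  ext e
  constructor
  · rintro ⟨e', he', rfl⟩
    rw [cycleG_edge_iff ht] at he'
    obtain ⟨x, rfl⟩ := he'
    exact hfwd x
  · intro he
    rw [cycleG_edge_iff ht] at he
    obtain ⟨y, rfl⟩ := he
    obtain ⟨x, hx⟩ := hbwd y
    exact ⟨s(x, x + 1), (cycleG_edge_iff ht).2 ⟨x, rfl⟩, hx⟩

lemma exists_phi (ht : 2 < t) (u v a : ZMod t) (hv : v = u + a ∨ v = u - a) :
    ∃ φ : ZMod t → ZMod t, Function.Injective φ ∧ φ 0 = u ∧ φ a = v ∧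
      Sym2.map φ '' (cycleG t).edgeSet = (cycleG t).edgeSet := by
  rcases hv with hv | hv
  · refine ⟨fun x => u + x, fun x y h => by simpa using h, by simp, by rw [hv], ?_⟩
    refine sym2_map_edgeSet ht (fun x => ?_) (fun y => ?_)
    · rw [Sym2.map_pair_eq]
      rw [cycleG_edge_iff ht]
      exact ⟨u + x, by rw [show u + (x + 1) = (u + x) + 1 by ring]⟩
    · refine ⟨y - u, ?_⟩
      rw [Sym2.map_pair_eq]
      congr 1 <;> ring
  · refine ⟨fun x => u - x, fun x y h => by simpa [sub_eq_sub_iff_sub_eq_sub] using h, by simp,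
      by rw [hv], ?_⟩
    refine sym2_map_edgeSet ht (fun x => ?_) (fun y => ?_)
    · rw [Sym2.map_pair_eq]
      rw [cycleG_edge_iff ht]
      refine ⟨u - (x + 1), ?_⟩
      rw [Sym2.eq_swap]
      congr 1
      ring
    · refine ⟨u - (y + 1), ?_⟩
      rw [Sym2.map_pair_eq, Sym2.eq_swap]
      congr 1 <;> ring

lemma relabel_props (ht : 2 < t) {g : ZMod t → ℕ} {φ : ZMod t → ZMod t}
    (hφi : Function.Injective φ)
    (hmap : Sym2.map φ '' (cycleG t).edgeSet = (cycleG t).edgeSet)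
    (hInjOn : Set.InjOn (edgeLabel g) (cycleG t).edgeSet) :
    Set.InjOn (edgeLabel (g ∘ φ)) (cycleG t).edgeSet ∧
    edgeLabel (g ∘ φ) '' (cycleG t).edgeSet = edgeLabel g '' (cycleG t).edgeSet := by
  have him : ∀ e ∈ (cycleG t).edgeSet, Sym2.map φ e ∈ (cycleG t).edgeSet := by
    intro e he
    rw [← hmap]
    exact ⟨e, he, rfl⟩
  constructor
  · intro e he e' he' h
    rw [edgeLabel_comp, edgeLabel_comp] at h
    exact Sym2.map.injective hφi (hInjOn (him e he) (him e' he') h)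
  · have hc : edgeLabel (g ∘ φ) = edgeLabel g ∘ Sym2.map φ := funext (edgeLabel_comp g φ)
    rw [hc, Set.image_comp, hmap]

end Relabel

section Blocks

/-- A good block: a labelling of one cycle with values in `[lo, lo + s*t]` whose
edge labels behave like the interval `[s*t - t + 1, s*t]`. -/
structure GoodBlock (t s lo : ℕ) (f : ZMod t → ℕ) : Prop where
  inj : Function.Injective f
  lb : ∀ x, lo ≤ f x
  ub : ∀ x, f x ≤ lo + s * t
  einj : ∀ x y : ZMod t, Nat.dist (f x) (f (x + 1)) = Nat.dist (f y) (f (y + 1)) → x = y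
  elb : ∀ x : ZMod t, s * t - t + 1 ≤ Nat.dist (f x) (f (x + 1))
  eub : ∀ x : ZMod t, Nat.dist (f x) (f (x + 1)) ≤ s * t
  esurj : ∀ v, s * t - t + 1 ≤ v → v ≤ s * t → ∃ x : ZMod t, Nat.dist (f x) (f (x + 1)) = v

/-- Exit data for a block: the exit vertex `a` carries the boundary value `b`, which is an
endpoint of the strictly smaller next window `[lo', lo' + (s*t - t)]`, and `a` is the only
vertex whose value lies in the next window. -/
structure ExitBlock (t s lo : ℕ) (f : ZMod t → ℕ) (a : ZMod t) (b lo' : ℕ) (flip' : Bool) :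
    Prop where
  fa : f a = b
  uniq : ∀ x, lo' ≤ f x → f x ≤ lo' + (s * t - t) → x = a
  lo_lt : lo < lo'
  hi_lt : lo' + (s * t - t) < lo + s * t
  hb : b = if flip' then lo' + (s * t - t) else lo'

variable {t : ℕ}

lemma edge_facts (ht : 2 < t) {g : ZMod t → ℕ} {L U : ℕ}
    (hInjOn : Set.InjOn (edgeLabel g) (cycleG t).edgeSet)
    (him : edgeLabel g '' (cycleG t).edgeSet = Set.Icc L U) :
    (∀ x y : ZMod t, Nat.dist (g x) (g (x + 1)) = Nat.dist (g y) (g (y + 1)) → x = y)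
    ∧ (∀ x : ZMod t, L ≤ Nat.dist (g x) (g (x + 1)) ∧ Nat.dist (g x) (g (x + 1)) ≤ U)
    ∧ (∀ v, L ≤ v → v ≤ U → ∃ x : ZMod t, Nat.dist (g x) (g (x + 1)) = v) := by
  have hmem : ∀ x : ZMod t, s(x, x + 1) ∈ (cycleG t).edgeSet :=
    fun x => (cycleG_edge_iff ht).2 ⟨x, rfl⟩
  refine ⟨?_, ?_, ?_⟩
  · intro x y h
    have h' : edgeLabel g s(x, x + 1) = edgeLabel g s(y, y + 1) := h
    exact succ_edge_inj ht (hInjOn (hmem x) (hmem y) h')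
  · intro x
    have : edgeLabel g s(x, x + 1) ∈ Set.Icc L U := him ▸ ⟨s(x, x + 1), hmem x, rfl⟩
    exact this
  · intro v hv1 hv2
    have : v ∈ edgeLabel g '' (cycleG t).edgeSet := him ▸ Set.mem_Icc.2 ⟨hv1, hv2⟩
    obtain ⟨e, he, hev⟩ := this
    obtain ⟨x, rfl⟩ := (cycleG_edge_iff ht).1 he
    exact ⟨x, hev⟩

lemma goodblock_of (ht : 4 ≤ t) {s : ℕ} (hs : 1 ≤ s) {g : ZMod t → ℕ}
    (hginj : Function.Injective g) (hgub : ∀ x, g x ≤ s * t)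
    (he1 : ∀ x y : ZMod t, Nat.dist (g x) (g (x + 1)) = Nat.dist (g y) (g (y + 1)) → x = y)
    (he2 : ∀ x : ZMod t, s * t - t + 1 ≤ Nat.dist (g x) (g (x + 1))
        ∧ Nat.dist (g x) (g (x + 1)) ≤ s * t)
    (he3 : ∀ v, s * t - t + 1 ≤ v → v ≤ s * t → ∃ x : ZMod t, Nat.dist (g x) (g (x + 1)) = v)
    (lo : ℕ) :
    GoodBlock t s lo (fun x => lo + g x) ∧ GoodBlock t s lo (fun x => lo + (s * t - g x)) := by
  have hdist1 : ∀ x y : ZMod t, Nat.dist (lo + g x) (lo + g y) = Nat.dist (g x) (g y) :=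
    fun x y => Nat.dist_add_add_left lo _ _
  have hdist2 : ∀ x y : ZMod t,
      Nat.dist (lo + (s * t - g x)) (lo + (s * t - g y)) = Nat.dist (g x) (g y) := by
    intro x y
    rw [Nat.dist_add_add_left, nat_dist_sub_sub _ _ _ (hgub x) (hgub y)]
  constructor
  · refine ⟨fun x y h => hginj (by omega), fun x => by omega, fun x => ?_, ?_, ?_, ?_, ?_⟩
    · have := hgub x; omega
    · intro x y h; rw [hdist1, hdist1] at h; exact he1 x y h
    · intro x; rw [hdist1]; exact (he2 x).1
    · intro x; rw [hdist1]; exact (he2 x).2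
    · intro v h1 h2; obtain ⟨x, hx⟩ := he3 v h1 h2; exact ⟨x, by rw [hdist1]; exact hx⟩
  · refine ⟨fun x y h => ?_, fun x => by omega, fun x => by omega, ?_, ?_, ?_, ?_⟩
    · have hx := hgub x; have hy := hgub y
      exact hginj (by omega : g x = g y)
    · intro x y h; rw [hdist2, hdist2] at h; exact he1 x y h
    · intro x; rw [hdist2]; exact (he2 x).1
    · intro x; rw [hdist2]; exact (he2 x).2
    · intro v h1 h2; obtain ⟨x, hx⟩ := he3 v h1 h2; exact ⟨x, by rw [hdist2]; exact hx⟩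

section ExitLemmas

variable {s : ℕ} {g : ZMod t → ℕ} {a : ZMod t} {w m₁ m₂ lo : ℕ}

variable (hgub : ∀ x, g x ≤ s * t) (hga : g a = w) (hguniq : ∀ x, g x = w → x = a)
  (hgap : ∀ x, g x ≤ m₁ ∨ m₂ ≤ g x) (hm : m₁ + (s * t - t) < m₂) (hm1 : 1 ≤ m₁)
  (hm2 : m₂ < s * t) (hts : t ≤ s * t)

include hgub hga hguniq hgap hm hm1 hm2 hts

lemma exit_up_low (hw : w = m₁) :
    ExitBlock t s lo (fun x => lo + g x) a (lo + w) (lo + w) false := by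
  subst hw
  refine ⟨by rw [hga], ?_, by omega, by omega, by simp⟩
  intro x h1 h2
  rcases hgap x with h | h <;> exact hguniq x (by omega)

lemma exit_up_high (hw : w = m₂) :
    ExitBlock t s lo (fun x => lo + g x) a (lo + w) (lo + w - (s * t - t)) true := by
  subst hw
  refine ⟨by rw [hga], ?_, by omega, by omega, by simp; omega⟩
  intro x h1 h2
  rcases hgap x with h | h <;> exact hguniq x (by omega)

lemma exit_down_low (hw : w = m₁) :
    ExitBlock t s lo (fun x => lo + (s * t - g x)) a (lo + (s * t - w))
      (lo + (s * t - w) - (s * t - t)) true := by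
  subst hw
  refine ⟨by rw [hga], ?_, by omega, by omega, by simp; omega⟩
  intro x h1 h2
  have := hgub x
  rcases hgap x with h | h <;> exact hguniq x (by omega)

lemma exit_down_high (hw : w = m₂) :
    ExitBlock t s lo (fun x => lo + (s * t - g x)) a (lo + (s * t - w))
      (lo + (s * t - w)) false := by
  subst hw
  refine ⟨by rw [hga], ?_, by omega, by omega, by simp⟩
  intro x h1 h2
  have := hgub x
  rcases hgap x with h | h <;> exact hguniq x (by omega)

end ExitLemmas

end Blocks

section BlockExistence

variable {t : ℕ}

lemma extract_g (ht2 : 2 < t) {s : ℕ} {f₀ : ZMod t → ℕ} {u v : ZMod t}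
    (hInjOn : Set.InjOn (edgeLabel f₀) (cycleG t).edgeSet)
    (him : edgeLabel f₀ '' (cycleG t).edgeSet = Set.Icc (s * t - t + 1) (s * t))
    {a : ZMod t} (hva : v = u + a ∨ v = u - a) :
    ∃ ψ : ZMod t → ZMod t, Function.Injective ψ ∧ ψ 0 = u ∧ ψ a = v ∧
      (∀ x y : ZMod t, Nat.dist (f₀ (ψ x)) (f₀ (ψ (x + 1)))
          = Nat.dist (f₀ (ψ y)) (f₀ (ψ (y + 1))) → x = y) ∧
      (∀ x : ZMod t, s * t - t + 1 ≤ Nat.dist (f₀ (ψ x)) (f₀ (ψ (x + 1)))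
          ∧ Nat.dist (f₀ (ψ x)) (f₀ (ψ (x + 1))) ≤ s * t) ∧
      (∀ w', s * t - t + 1 ≤ w' → w' ≤ s * t →
          ∃ x : ZMod t, Nat.dist (f₀ (ψ x)) (f₀ (ψ (x + 1))) = w') := by
  obtain ⟨ψ, hψi, hψ0, hψa, hψmap⟩ := exists_phi ht2 u v a hva
  obtain ⟨gInjOn, gim⟩ := relabel_props ht2 hψi hψmap hInjOn
  rw [him] at gim
  obtain ⟨he1, he2, he3⟩ := edge_facts ht2 gInjOn gim
  exact ⟨ψ, hψi, hψ0, hψa, he1, he2, he3⟩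

/-- Extract a relabelled, shifted useful cycle with entry vertex `0` and exit vertex `a`. -/
lemma exists_block (ht : 4 ≤ t) (hte : t % 2 = 0) {s : ℕ} (hs : 1 ≤ s)
    (H : HasCompleteUsefulSet s t) (a : ZMod t) (ha : a ≠ 0) (lo : ℕ) (flip : Bool) :
    ∃ (f : ZMod t → ℕ) (b lo' : ℕ) (flip' : Bool),
      GoodBlock t s lo f ∧ f 0 = (if flip then lo + s * t else lo) ∧
      ExitBlock t s lo f a b lo' flip' := by
  haveI : NeZero t := ⟨by omega⟩
  have ht2 : 2 < t := by omega
  have hts : t ≤ s * t := Nat.le_mul_of_pos_left t hs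
  set d : ℕ := min a.val (t - a.val) with hd
  have hval_lt : a.val < t := ZMod.val_lt a
  have hval_ne : a.val ≠ 0 := fun h => ha ((ZMod.val_eq_zero a).1 h)
  have hd1 : 1 ≤ d := by omega
  have hd2 : d ≤ t / 2 := by omega
  have hacase : a = (d : ZMod t) ∨ -a = (d : ZMod t) := min_val_cases (by omega) rfl
  rcases H d hd1 hd2 with ⟨f₀, _, hinj, hvals, hInjOn, him, u, v, hu, hv, hdist⟩ |
    ⟨f₀, _, hinj, hvals, hInjOn, him, u, v, hu, hv, hdist⟩
  -- Even case: f₀ u = 0, f₀ v = t/2 - 1.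
  · have hvcase := cyc_dist_cases ht2 hdist hd1 (by omega)
    have hva : v = u + a ∨ v = u - a := by
      rcases hvcase with h1 | h1 <;> rcases hacase with h2 | h2
      · left; linear_combination h1 - h2
      · right; linear_combination h1 - h2
      · right; linear_combination h2 - h1
      · left; linear_combination h2 - h1
    obtain ⟨ψ, hψi, hψ0, hψa, he1, he2, he3⟩ := extract_g ht2 hInjOn him hva
    set g : ZMod t → ℕ := fun x => f₀ (ψ x) with hgdef
    have hgap : ∀ x, g x ≤ t / 2 - 1 ∨ s * t - t / 2 ≤ g x := by
      intro x
      have hfx : g x = f₀ (ψ x) := rfl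
      rcases hvals (ψ x) with h | h <;> simp only [Set.mem_Icc] at h
      · exact Or.inl (by omega)
      · exact Or.inr (by omega)
    have hgub : ∀ x, g x ≤ s * t := by
      intro x
      have hfx : g x = f₀ (ψ x) := rfl
      rcases hvals (ψ x) with h | h <;> simp only [Set.mem_Icc] at h
      · omega
      · omega
    have hg0 : g 0 = 0 := by rw [hgdef]; simp only [hψ0, hu]
    have hga : g a = t / 2 - 1 := by rw [hgdef]; simp only [hψa, hv]
    have hguniq : ∀ x, g x = t / 2 - 1 → x = a := by
      intro x hx
      have : ψ x = v := hinj (by rw [show f₀ (ψ x) = g x from rfl, hx, hv])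
      exact hψi (by rw [this, hψa])
    have hginj : Function.Injective g := fun x y h => hψi (hinj h)
    obtain ⟨gb1, gb2⟩ := goodblock_of ht hs hginj hgub he1 he2 he3 lo
    have hm : (t / 2 - 1) + (s * t - t) < s * t - t / 2 := by omega
    have hm1 : 1 ≤ t / 2 - 1 := by omega
    have hm2 : s * t - t / 2 < s * t := by omega
    cases flip
    · exact ⟨_, _, _, _, gb1, by simp [hg0], exit_up_low hgub hga hguniq hgap hm hm1 hm2 hts rfl⟩
    · exact ⟨_, _, _, _, gb2, by simp [hg0], exit_down_low hgub hga hguniq hgap hm hm1 hm2 hts rfl⟩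
  -- Odd case: f₀ u = 0, f₀ v = s*t - t/2 + 1.
  · have hvcase := cyc_dist_cases ht2 hdist hd1 (by omega)
    have hva : v = u + a ∨ v = u - a := by
      rcases hvcase with h1 | h1 <;> rcases hacase with h2 | h2
      · left; linear_combination h1 - h2
      · right; linear_combination h1 - h2
      · right; linear_combination h2 - h1
      · left; linear_combination h2 - h1
    obtain ⟨ψ, hψi, hψ0, hψa, he1, he2, he3⟩ := extract_g ht2 hInjOn him hva
    set g : ZMod t → ℕ := fun x => f₀ (ψ x) with hgdef
    have hgap : ∀ x, g x ≤ t / 2 ∨ s * t - t / 2 + 1 ≤ g x := by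
      intro x
      have hfx : g x = f₀ (ψ x) := rfl
      rcases hvals (ψ x) with h | h <;> simp only [Set.mem_Icc] at h
      · exact Or.inl (by omega)
      · exact Or.inr (by omega)
    have hgub : ∀ x, g x ≤ s * t := by
      intro x
      have hfx : g x = f₀ (ψ x) := rfl
      rcases hvals (ψ x) with h | h <;> simp only [Set.mem_Icc] at h
      · omega
      · omega
    have hg0 : g 0 = 0 := by rw [hgdef]; simp only [hψ0, hu]
    have hga : g a = s * t - t / 2 + 1 := by rw [hgdef]; simp only [hψa, hv]
    have hguniq : ∀ x, g x = s * t - t / 2 + 1 → x = a := by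
      intro x hx
      have : ψ x = v := hinj (by rw [show f₀ (ψ x) = g x from rfl, hx, hv])
      exact hψi (by rw [this, hψa])
    have hginj : Function.Injective g := fun x y h => hψi (hinj h)
    obtain ⟨gb1, gb2⟩ := goodblock_of ht hs hginj hgub he1 he2 he3 lo
    have hm : (t / 2) + (s * t - t) < s * t - t / 2 + 1 := by omega
    have hm1 : 1 ≤ t / 2 := by omega
    have hm2 : s * t - t / 2 + 1 < s * t := by omega
    cases flip
    · exact ⟨_, _, _, _, gb1, by simp [hg0], exit_up_high hgub hga hguniq hgap hm hm1 hm2 hts rfl⟩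
    · exact ⟨_, _, _, _, gb2, by simp [hg0],
        exit_down_high hgub hga hguniq hgap hm hm1 hm2 hts rfl⟩

/-- A block for the last cycle: no exit needed, entry at position `0`. -/
lemma exists_block_one (ht : 4 ≤ t) (hte : t % 2 = 0) {s : ℕ} (hs : 1 ≤ s)
    (H : HasCompleteUsefulSet s t) (lo : ℕ) (flip : Bool) :
    ∃ f : ZMod t → ℕ, GoodBlock t s lo f ∧ f 0 = (if flip then lo + s * t else lo) := by
  have ht2 : 2 < t := by omega
  have hts : t ≤ s * t := Nat.le_mul_of_pos_left t hs
  have hd2 : 2 ≤ t / 2 := by omega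
  have key : ∃ (f₀ : ZMod t → ℕ) (u : ZMod t), Function.Injective f₀ ∧
      (∀ x, f₀ x ≤ s * t) ∧ Set.InjOn (edgeLabel f₀) (cycleG t).edgeSet ∧
      edgeLabel f₀ '' (cycleG t).edgeSet = Set.Icc (s * t - t + 1) (s * t) ∧ f₀ u = 0 := by
    rcases H 2 (by norm_num) hd2 with ⟨f₀, _, hinj, hvals, hInjOn, him, u, v, hu, _, _⟩ |
      ⟨f₀, _, hinj, hvals, hInjOn, him, u, v, hu, _, _⟩
    · refine ⟨f₀, u, hinj, ?_, hInjOn, him, hu⟩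
      intro x
      rcases hvals x with h | h <;> simp only [Set.mem_Icc] at h <;> omega
    · refine ⟨f₀, u, hinj, ?_, hInjOn, him, hu⟩
      intro x
      rcases hvals x with h | h <;> simp only [Set.mem_Icc] at h <;> omega
  obtain ⟨f₀, u, hinj, hub, hInjOn, him, hu⟩ := key
  obtain ⟨ψ, hψi, hψ0, hψa, he1, he2, he3⟩ :=
    extract_g ht2 hInjOn him (Or.inl (add_zero u).symm)
  set g : ZMod t → ℕ := fun x => f₀ (ψ x) with hgdef
  have hginj : Function.Injective g := fun x y h => hψi (hinj h)
  have hgub : ∀ x, g x ≤ s * t := fun x => hub (ψ x)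
  have hg0 : g 0 = 0 := by rw [hgdef]; simp only [hψ0, hu]
  obtain ⟨gb1, gb2⟩ := goodblock_of ht hs hginj hgub he1 he2 he3 lo
  cases flip
  · exact ⟨_, gb1, by simp [hg0]⟩
  · exact ⟨_, gb2, by simp [hg0]⟩

/-- A block for a first cycle whose two cut vertices coincide (at position `0`). -/
lemma exists_block_head (ht : 4 ≤ t) (hte : t % 2 = 0) {s : ℕ} (hs : 1 ≤ s)
    (H : HasCompleteUsefulSet s t) (lo : ℕ) :
    ∃ (f : ZMod t → ℕ) (b lo' : ℕ),
      GoodBlock t s lo f ∧ ExitBlock t s lo f 0 b lo' false := by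
  have ht2 : 2 < t := by omega
  have hts : t ≤ s * t := Nat.le_mul_of_pos_left t hs
  have hd2 : 2 ≤ t / 2 := by omega
  rcases H 2 (by norm_num) hd2 with ⟨f₀, _, hinj, hvals, hInjOn, him, u, v, hu, hv, _⟩ |
    ⟨f₀, hodd, _, _, _, _, _⟩
  · obtain ⟨ψ, hψi, hψ0, hψa, he1, he2, he3⟩ :=
      extract_g ht2 hInjOn him (Or.inl (add_zero v).symm)
    set g : ZMod t → ℕ := fun x => f₀ (ψ x) with hgdef
    have hginj : Function.Injective g := fun x y h => hψi (hinj h)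
    have hgap : ∀ x, g x ≤ t / 2 - 1 ∨ s * t - t / 2 ≤ g x := by
      intro x
      have hfx : g x = f₀ (ψ x) := rfl
      rcases hvals (ψ x) with h | h <;> simp only [Set.mem_Icc] at h
      · exact Or.inl (by omega)
      · exact Or.inr (by omega)
    have hgub : ∀ x, g x ≤ s * t := by
      intro x
      have hfx : g x = f₀ (ψ x) := rfl
      rcases hvals (ψ x) with h | h <;> simp only [Set.mem_Icc] at h
      · omega
      · omega
    have hga : g 0 = t / 2 - 1 := by rw [hgdef]; simp only [hψ0, hv]
    have hguniq : ∀ x, g x = t / 2 - 1 → x = 0 := by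
      intro x hx
      have : ψ x = v := hinj (by rw [show f₀ (ψ x) = g x from rfl, hx, hv])
      exact hψi (by rw [this, hψ0])
    obtain ⟨gb1, _⟩ := goodblock_of ht hs hginj hgub he1 he2 he3 lo
    have hm : (t / 2 - 1) + (s * t - t) < s * t - t / 2 := by omega
    have hm1 : 1 ≤ t / 2 - 1 := by omega
    have hm2 : s * t - t / 2 < s * t := by omega
    exact ⟨_, _, _, gb1, exit_up_low hgub hga hguniq hgap hm hm1 hm2 hts rfl⟩
  · exfalso
    rw [Nat.odd_iff] at hodd
    norm_num at hodd

end BlockExistence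

section SnakeMain

variable {t : ℕ}

lemma sig_fst {k' : ℕ} {p q : Σ _ : Fin k', ZMod t} (h : p = q) : p.1.val = q.1.val := by rw [h]

lemma sig_snd {k' : ℕ} {p q : Σ _ : Fin k', ZMod t} (h : p = q) : p.2 = q.2 := by rw [h]

/-- The main inductive construction: a labelling of the disjoint union of `k` cycles,
graceful relative to the window `[lo, lo + k*t]`, compatible with the gluing. -/
lemma snake_main (ht : 4 ≤ t) (hte : t % 2 = 0)
    (H : ∀ s : ℕ, 1 ≤ s → HasCompleteUsefulSet s t) :
    ∀ (k : ℕ) (hk : 1 ≤ k) (a : Fin k → ZMod t),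
      (∀ j : Fin k, 0 < j.val → j.val + 1 < k → a j ≠ 0) →
      ∀ (lo : ℕ) (flip : Bool),
      ∃ F : (Σ _ : Fin k, ZMod t) → ℕ,
        ((k = 1 ∨ a ⟨0, by omega⟩ ≠ 0) →
            F ⟨⟨0, by omega⟩, 0⟩ = if flip then lo + k * t else lo) ∧
        (∀ p, lo ≤ F p ∧ F p ≤ lo + k * t) ∧
        (∀ (j : ℕ) (hj : j + 1 < k),
            F ⟨⟨j, by omega⟩, a ⟨j, by omega⟩⟩ = F ⟨⟨j + 1, hj⟩, 0⟩) ∧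
        (∀ p q, F p = F q → p = q ∨
            snakeGlue k (fun _ => t) a p q ∨ snakeGlue k (fun _ => t) a q p) ∧
        (∀ (j j' : Fin k) (x x' : ZMod t),
            Nat.dist (F ⟨j, x⟩) (F ⟨j, x + 1⟩) = Nat.dist (F ⟨j', x'⟩) (F ⟨j', x' + 1⟩) →
            j = j' ∧ x = x') ∧
        (∀ (j : Fin k) (x : ZMod t), 1 ≤ Nat.dist (F ⟨j, x⟩) (F ⟨j, x + 1⟩)
            ∧ Nat.dist (F ⟨j, x⟩) (F ⟨j, x + 1⟩) ≤ k * t) ∧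
        (∀ v, 1 ≤ v → v ≤ k * t → ∃ (j : Fin k) (x : ZMod t),
            Nat.dist (F ⟨j, x⟩) (F ⟨j, x + 1⟩) = v) := by
  intro k hk
  induction k, hk using Nat.le_induction with
  | base =>
    intro a _ lo flip
    obtain ⟨f, gb, hf0⟩ := exists_block_one ht hte le_rfl (H 1 le_rfl) lo flip
    refine ⟨fun p => f p.2, fun _ => hf0, fun p => ⟨gb.lb p.2, gb.ub p.2⟩, ?_, ?_, ?_, ?_, ?_⟩
    · intro j hj; omega
    · rintro ⟨j, x⟩ ⟨j', x'⟩ h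
      left
      have hj : j = j' := Subsingleton.elim j j'
      subst hj
      have hx : x = x' := gb.inj h
      rw [hx]
    · intro j j' x x' h
      exact ⟨Subsingleton.elim j j', gb.einj x x' h⟩
    · intro j x
      show 1 ≤ Nat.dist (f x) (f (x + 1)) ∧ Nat.dist (f x) (f (x + 1)) ≤ 1 * t
      have h1 := gb.elb x
      have h2 := gb.eub x
      omega
    · intro v hv1 hv2
      obtain ⟨x, hx⟩ := gb.esurj v (by omega) (by omega)
      exact ⟨⟨0, by omega⟩, x, hx⟩
  | succ k hk IH =>
    intro a hint lo flip
    have hmul : (k + 1) * t = k * t + t := Nat.succ_mul k t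
    have hkt : (k + 1) * t - t = k * t := by omega
    have h0 : (0 : ℕ) < k + 1 := by omega
    set a0 : ZMod t := a ⟨0, h0⟩ with ha0
    -- the head block
    have key : ∃ (f₀ : ZMod t → ℕ) (b lo' : ℕ) (flip' : Bool),
        GoodBlock t (k + 1) lo f₀ ∧
        ((k + 1 = 1 ∨ a0 ≠ 0) → f₀ 0 = if flip then lo + (k + 1) * t else lo) ∧
        ExitBlock t (k + 1) lo f₀ a0 b lo' flip' := by
      by_cases hc : a0 = 0
      · obtain ⟨f₀, b, lo', gb, ex⟩ :=
          exists_block_head ht hte (by omega) (H (k + 1) (by omega)) lo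
        have ex' : ExitBlock t (k + 1) lo f₀ a0 b lo' false := by rw [hc]; exact ex
        refine ⟨f₀, b, lo', false, gb, fun h => ?_, ex'⟩
        rcases h with h | h
        · omega
        · exact absurd hc h
      · obtain ⟨f₀, b, lo', flip', gb, hen, ex⟩ :=
          exists_block ht hte (by omega) (H (k + 1) (by omega)) a0 hc lo flip
        exact ⟨f₀, b, lo', flip', gb, fun _ => hen, ex⟩
    obtain ⟨f₀, b, lo', flip', gb, hentry, ex⟩ := key
    -- the tail snake
    set a' : Fin k → ZMod t := fun j => a ⟨j.val + 1, by omega⟩ with ha'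
    have hint' : ∀ j : Fin k, 0 < j.val → j.val + 1 < k → a' j ≠ 0 := by
      intro j h1 h2
      exact hint ⟨j.val + 1, by omega⟩ (Nat.succ_pos j.val)
        (show j.val + 1 + 1 < k + 1 by omega)
    have hcond' : k = 1 ∨ a' ⟨0, by omega⟩ ≠ 0 := by
      by_cases hk1 : k = 1
      · exact Or.inl hk1
      · exact Or.inr (hint ⟨1, by omega⟩ Nat.one_pos (show 1 + 1 < k + 1 by omega))
    obtain ⟨F', hF1, hF2, hF3, hF4, hF5, hF6, hF7⟩ := IH a' hint' lo' flip'
    have hF'entry : F' ⟨⟨0, by omega⟩, 0⟩ = b := by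
      rw [hF1 hcond', ex.hb, hkt]
    -- the assembled labelling with its two defining equations
    obtain ⟨F, hFhead, hFtail⟩ : ∃ F : (Σ _ : Fin (k + 1), ZMod t) → ℕ,
        (∀ (hj : 0 < k + 1) (x : ZMod t), F ⟨⟨0, hj⟩, x⟩ = f₀ x) ∧
        (∀ (j : ℕ) (hj : j + 1 < k + 1) (x : ZMod t),
          F ⟨⟨j + 1, hj⟩, x⟩ = F' ⟨⟨j, Nat.lt_of_succ_lt_succ hj⟩, x⟩) :=
      ⟨fun p => if h : p.1.val = 0 then f₀ p.2
          else F' ⟨⟨p.1.val - 1, by omega⟩, p.2⟩,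
        fun _ _ => rfl, fun _ _ _ => rfl⟩
    -- the mixed-value analysis
    have hmixed : ∀ (x : ZMod t) (i : ℕ) (hi : i < k) (x' : ZMod t),
        f₀ x = F' ⟨⟨i, hi⟩, x'⟩ → x = a0 ∧ i = 0 ∧ x' = 0 := by
      intro x i hi x' hfe
      have hb1 := hF2 ⟨⟨i, hi⟩, x'⟩
      have hxa : x = a0 := ex.uniq x (by omega) (by omega)
      have hfb : F' ⟨⟨i, hi⟩, x'⟩ = F' ⟨⟨0, by omega⟩, 0⟩ := by
        rw [hF'entry, ← hfe, hxa, ex.fa]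
      rcases hF4 _ _ hfb with heq | hg | hg
      · have h1 : i = 0 := sig_fst heq
        have h2 : x' = 0 := sig_snd heq
        exact ⟨hxa, h1, h2⟩
      · exfalso
        obtain ⟨j', hj', _, hq⟩ := hg
        have := sig_fst hq
        simp at this
      · exfalso
        obtain ⟨j', hj', hp, hq⟩ := hg
        have hj'0 : (0 : ℕ) = j' := sig_fst hp
        have hsnd := sig_snd hp
        rcases hcond' with hk1 | hne
        · omega
        · apply hne
          have : a' ⟨j', Nat.lt_of_succ_lt hj'⟩ = 0 := hsnd.symm
          rw [show (⟨0, by omega⟩ : Fin k) = ⟨j', Nat.lt_of_succ_lt hj'⟩ from Fin.ext hj'0]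
          exact this
    refine ⟨F, ?_, ?_, ?_, ?_, ?_, ?_, ?_⟩
    · -- entry value
      intro hcond
      rw [hFhead]
      exact hentry hcond
    · -- bounds
      rintro ⟨⟨jv, hjv⟩, x⟩
      cases jv with
      | zero =>
        rw [hFhead]
        exact ⟨gb.lb x, gb.ub x⟩
      | succ i =>
        rw [hFtail]
        have h1 := hF2 ⟨⟨i, Nat.lt_of_succ_lt_succ hjv⟩, x⟩
        have h2 := ex.lo_lt
        have h3 := ex.hi_lt
        omega
    · -- glue compatibility
      intro j hj
      cases j with
      | zero =>
        rw [hFhead, hFtail]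
        exact (ex.fa).trans hF'entry.symm
      | succ i =>
        rw [hFtail, hFtail]
        exact hF3 i (by omega)
    · -- injectivity modulo glue
      rintro ⟨⟨jv, hjv⟩, x⟩ ⟨⟨jv', hjv'⟩, x'⟩ h
      cases jv with
      | zero =>
        cases jv' with
        | zero =>
          rw [hFhead, hFhead] at h
          left
          have hx : x = x' := gb.inj h
          rw [hx]
        | succ i' =>
          rw [hFhead, hFtail] at h
          obtain ⟨hxa, hi0, hx0⟩ := hmixed x i' (Nat.lt_of_succ_lt_succ hjv') x' h
          subst hi0
          subst hx0
          subst hxa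
          exact Or.inr (Or.inl ⟨0, by omega, rfl, rfl⟩)
      | succ i =>
        cases jv' with
        | zero =>
          rw [hFtail, hFhead] at h
          obtain ⟨hxa, hi0, hx0⟩ := hmixed x' i (Nat.lt_of_succ_lt_succ hjv) x h.symm
          subst hi0
          subst hx0
          subst hxa
          exact Or.inr (Or.inr ⟨0, by omega, rfl, rfl⟩)
        | succ i' =>
          rw [hFtail, hFtail] at h
          rcases hF4 _ _ h with heq | hg | hg
          · left
            have h1 : i = i' := sig_fst heq
            have h2 : x = x' := sig_snd heq
            subst h1
            subst h2
            rfl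
          · obtain ⟨j', hj', hp, hq⟩ := hg
            have h1 : i = j' := sig_fst hp
            have h2 : x = a' ⟨j', Nat.lt_of_succ_lt hj'⟩ := sig_snd hp
            have h3 : i' = j' + 1 := sig_fst hq
            have h4 : x' = 0 := sig_snd hq
            subst h1
            subst h3
            subst h2
            subst h4
            exact Or.inr (Or.inl ⟨i + 1, by omega, rfl, rfl⟩)
          · obtain ⟨j', hj', hp, hq⟩ := hg
            have h1 : i' = j' := sig_fst hp
            have h2 : x' = a' ⟨j', Nat.lt_of_succ_lt hj'⟩ := sig_snd hp
            have h3 : i = j' + 1 := sig_fst hq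
            have h4 : x = 0 := sig_snd hq
            subst h1
            subst h3
            subst h2
            subst h4
            exact Or.inr (Or.inr ⟨i' + 1, by omega, rfl, rfl⟩)
    · -- edge injectivity
      rintro ⟨jv, hjv⟩ ⟨jv', hjv'⟩ x x' h
      cases jv with
      | zero =>
        cases jv' with
        | zero =>
          rw [hFhead, hFhead, hFhead, hFhead] at h
          exact ⟨rfl, gb.einj x x' h⟩
        | succ i' =>
          exfalso
          rw [hFhead, hFhead, hFtail, hFtail] at h
          have h1 := gb.elb x
          have h2 := (hF6 ⟨i', Nat.lt_of_succ_lt_succ hjv'⟩ x').2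
          omega
      | succ i =>
        cases jv' with
        | zero =>
          exfalso
          rw [hFtail, hFtail, hFhead, hFhead] at h
          have h1 := gb.elb x'
          have h2 := (hF6 ⟨i, Nat.lt_of_succ_lt_succ hjv⟩ x).2
          omega
        | succ i' =>
          rw [hFtail, hFtail, hFtail, hFtail] at h
          obtain ⟨hj, hx⟩ :=
            hF5 ⟨i, Nat.lt_of_succ_lt_succ hjv⟩ ⟨i', Nat.lt_of_succ_lt_succ hjv'⟩ x x' h
          have hii : i = i' := congrArg Fin.val hj
          subst hii
          exact ⟨rfl, hx⟩
    · -- edge bounds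
      rintro ⟨jv, hjv⟩ x
      cases jv with
      | zero =>
        rw [hFhead, hFhead]
        have h1 := gb.elb x
        have h2 := gb.eub x
        omega
      | succ i =>
        rw [hFtail, hFtail]
        have := hF6 ⟨i, Nat.lt_of_succ_lt_succ hjv⟩ x
        omega
    · -- edge surjectivity
      intro v hv1 hv2
      by_cases hv : v ≤ k * t
      · obtain ⟨⟨iv, hiv⟩, x, hx⟩ := hF7 v hv1 hv
        refine ⟨⟨iv + 1, by omega⟩, x, ?_⟩
        rw [hFtail, hFtail]
        exact hx
      · obtain ⟨x, hx⟩ := gb.esurj v (by omega) (by omega)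
        refine ⟨⟨0, h0⟩, x, ?_⟩
        rw [hFhead, hFhead]
        exact hx
end SnakeMain

/-- Fix `n ≥ 1`.  If for every `s ≥ 1` there exists a complete
`s,4n`-useful cycle set, then for every `k ≥ 1`, every cyclic snake `kC_{4n}`
(with any string) is graceful (its number of edges being `k·4n`). -/
theorem stmt_5 (n : ℕ) (hn : 1 ≤ n)
    (H : ∀ s : ℕ, 1 ≤ s → HasCompleteUsefulSet s (4 * n)) :
    ∀ k : ℕ, 1 ≤ k → ∀ (V : Type*) (G : SimpleGraph V),
      IsCyclicSnake G k (4 * n) → ∃ f : V → ℕ, IsGraceful G (k * (4 * n)) f := by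
  intro k hk V G hsnake
  obtain ⟨a, hint, ⟨iso⟩⟩ := hsnake
  have ht : 4 ≤ 4 * n := by omega
  have hte : (4 * n) % 2 = 0 := by omega
  obtain ⟨F, _, hF2, hF3, hF4, hF5, hF6, hF7⟩ := snake_main ht hte H k hk a hint 0 false
  have hglue : ∀ p q, snakeGlue k (fun _ => 4 * n) a p q → F p = F q := by
    rintro p q ⟨j, hj, rfl, rfl⟩
    exact hF3 j hj
  have hsound : ∀ p q, Relation.EqvGen (snakeGlue k (fun _ => 4 * n) a) p q → F p = F q := by
    intro p q hpq
    induction hpq with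
    | rel p q h => exact hglue p q h
    | refl p => rfl
    | symm p q _ ih => exact ih.symm
    | trans p q r _ _ ih1 ih2 => exact ih1.trans ih2
  set Fbar : Quotient (snakeSetoid k (fun _ => 4 * n) a) → ℕ :=
    Quotient.lift F (fun p q h => hsound p q h) with hFbar
  have hlift : ∀ p, Fbar (Quotient.mk (snakeSetoid k (fun _ => 4 * n) a) p) = F p :=
    fun p => rfl
  have hmk : ∀ p q, F p = F q →
      Quotient.mk (snakeSetoid k (fun _ => 4 * n) a) p
        = Quotient.mk (snakeSetoid k (fun _ => 4 * n) a) q := by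
    intro p q h
    rcases hF4 p q h with rfl | hg | hg
    · rfl
    · exact Quotient.sound (Relation.EqvGen.rel p q hg)
    · exact (Quotient.sound (Relation.EqvGen.rel q p hg)).symm
  have hFbar_inj : Function.Injective Fbar := by
    intro α β h
    induction α using Quotient.ind with | _ p => ?_
    induction β using Quotient.ind with | _ q => ?_
    exact hmk p q h
  have hedge_char : ∀ e, e ∈ (snakeGraph k (fun _ => 4 * n) a).edgeSet →
      ∃ (j : Fin k) (x : ZMod (4 * n)),
        e = s(Quotient.mk (snakeSetoid k (fun _ => 4 * n) a) ⟨j, x⟩,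
              Quotient.mk (snakeSetoid k (fun _ => 4 * n) a) ⟨j, x + 1⟩) := by
    intro e
    induction e using Sym2.ind with
    | _ α β =>
      intro he
      rw [SimpleGraph.mem_edgeSet] at he
      obtain ⟨hne, p, q, hp, hq, j, x, y, rfl, rfl, hxy⟩ := he
      rcases hxy with rfl | rfl
      · exact ⟨j, x, by rw [← hp, ← hq]⟩
      · exact ⟨j, y, by rw [← hp, ← hq, Sym2.eq_swap]⟩
  have hne : ∀ (j : Fin k) (x : ZMod (4 * n)),
      Quotient.mk (snakeSetoid k (fun _ => 4 * n) a) ⟨j, x⟩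
        ≠ Quotient.mk (snakeSetoid k (fun _ => 4 * n) a) ⟨j, x + 1⟩ := by
    intro j x heq
    have h := hsound _ _ (Quotient.exact heq)
    have hd := (hF6 j x).1
    rw [h, Nat.dist_self] at hd
    omega
  have hadj : ∀ (j : Fin k) (x : ZMod (4 * n)),
      (snakeGraph k (fun _ => 4 * n) a).Adj
        (Quotient.mk (snakeSetoid k (fun _ => 4 * n) a) ⟨j, x⟩)
        (Quotient.mk (snakeSetoid k (fun _ => 4 * n) a) ⟨j, x + 1⟩) :=
    fun j x => ⟨hne j x, ⟨j, x⟩, ⟨j, x + 1⟩, rfl, rfl, j, x, x + 1, rfl, rfl, Or.inl rfl⟩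
  have hlabel : ∀ (j : Fin k) (x : ZMod (4 * n)),
      edgeLabel Fbar s(Quotient.mk (snakeSetoid k (fun _ => 4 * n) a) ⟨j, x⟩,
          Quotient.mk (snakeSetoid k (fun _ => 4 * n) a) ⟨j, x + 1⟩)
        = Nat.dist (F ⟨j, x⟩) (F ⟨j, x + 1⟩) := fun j x => rfl
  have hinjOn : Set.InjOn (edgeLabel Fbar) (snakeGraph k (fun _ => 4 * n) a).edgeSet := by
    intro e1 he1 e2 he2 hl
    obtain ⟨j1, x1, rfl⟩ := hedge_char e1 he1
    obtain ⟨j2, x2, rfl⟩ := hedge_char e2 he2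
    rw [hlabel, hlabel] at hl
    obtain ⟨h1, h2⟩ := hF5 j1 j2 x1 x2 hl
    subst h1
    subst h2
    rfl
  have himg : edgeLabel Fbar '' (snakeGraph k (fun _ => 4 * n) a).edgeSet
      = Set.Icc 1 (k * (4 * n)) := by
    apply Set.Subset.antisymm
    · rintro v ⟨e, he, rfl⟩
      obtain ⟨j, x, rfl⟩ := hedge_char e he
      rw [hlabel]
      have := hF6 j x
      exact Set.mem_Icc.2 ⟨this.1, this.2⟩
    · intro v hv
      rw [Set.mem_Icc] at hv
      obtain ⟨j, x, hx⟩ := hF7 v hv.1 hv.2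
      exact ⟨_, (SimpleGraph.mem_edgeSet _).2 (hadj j x), by rw [hlabel]; exact hx⟩
  have hc : ∀ e, edgeLabel (fun v => Fbar (iso v)) e = edgeLabel Fbar (Sym2.map (⇑iso) e) :=
    fun e => edgeLabel_comp Fbar (⇑iso) e
  have hmapim : Sym2.map (⇑iso) '' G.edgeSet = (snakeGraph k (fun _ => 4 * n) a).edgeSet := by
    apply Set.Subset.antisymm
    · rintro e' ⟨e, he, rfl⟩
      exact iso.map_mem_edgeSet_iff.2 he
    · intro e' he'
      refine ⟨Sym2.map (⇑iso.symm) e', iso.symm.map_mem_edgeSet_iff.2 he', ?_⟩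
      induction e' using Sym2.ind with
      | _ α β => simp [Sym2.map_pair_eq]
  have hub : ∀ α, Fbar α ≤ k * (4 * n) := by
    intro α
    induction α using Quotient.ind with | _ p => ?_
    have := (hF2 p).2
    rw [hlift]
    simpa using this
  refine ⟨fun v => Fbar (iso v), ?_, ?_, ?_, ?_⟩
  · intro v w h
    exact iso.toEquiv.injective (hFbar_inj h)
  · intro v
    exact hub (iso v)
  · intro e1 he1 e2 he2 hl
    rw [hc, hc] at hl
    have := hinjOn (iso.map_mem_edgeSet_iff.2 he1) (iso.map_mem_edgeSet_iff.2 he2) hl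
    exact Sym2.map.injective iso.toEquiv.injective this
  · have hfun : edgeLabel (fun v => Fbar (iso v)) = edgeLabel Fbar ∘ Sym2.map (⇑iso) :=
      funext hc
    rw [hfun, Set.image_comp, hmapim, himg]
end

section
/- For every k ≥ 1 and every cyclic snake kC_6 (with any string), and for every prescribed distance d ∈ {1, 2, 3}, there exists a labelling of kC_6 that is graceful if k is even and near graceful if k is odd, in which the label 0 is assigned to a vertex of the last cycle lying at distance d from the last cut vertex (i.e., 0 can be placed at any position of the last cycle other than the cut vertex). -/
/-!
Induction on the number of cycles. Suppose the snake with `k` cycles carries a labelling whose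
label `0` sits at the vertex where the next cycle is attached. Shift the old labels up by a
small `c`, or reflect them by `v ↦ M + c - v`; both keep every old edge label. Then label the new
cycle alternately with labels below `c` and labels above `6k`, missing the moved old labels
except the image of `6k`, which an odd snake leaves unused, so that its six edges get exactly
the six new edge labels: `6k + {1,2,3,4,5,7}` for even `k`, `6k + {0,2,3,4,5,6}` for odd `k`.
One explicit such labelling exists for each parity of `k` and each position of the new `0`
other than the cut vertex; as the two cut vertices of an internal cycle are distinct, the next
cut vertex is such a position. The induction starts from the near graceful labelling
`0, 4, 1, 3, 2, 7` of `C₆`.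
-/

namespace Set

theorem bijOn_univ_of_image_eq {α β : Type*} [Fintype α] [DecidableEq β] {f : α → β}
    {T : Finset β} (hf : Function.Injective f) (hT : Finset.univ.image f = T) :
    BijOn f univ T := by
  rw [← hT, Finset.coe_image, Finset.coe_univ]
  exact hf.injOn.bijOn_image

theorem bijOn_slice {α β γ : Type*} {f : α × β → γ} {j : α} {T : Set γ}
    (hf : BijOn (fun x => f (j, x)) univ T) : BijOn f {p | p.1 = j} T := by
  have : {p : α × β | p.1 = j} = Prod.mk j '' univ := by
    ext ⟨j', x⟩; simp [eq_comm]
  rw [this, ← bijOn_comp_iff (Prod.mk_right_injective j).injOn]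
  exact hf

end Set

def IsGracefulOn {V : Type*} (G : SimpleGraph V) (S : Set ℕ) (f : V → ℕ) : Prop :=
  Function.Injective f ∧ (∀ v, f v ∈ S) ∧ Set.BijOn (edgeLabel f) G.edgeSet (S \ {0})

namespace IsGracefulOn

variable {V W : Type*} {G : SimpleGraph V} {H : SimpleGraph W} {S : Set ℕ} {f : W → ℕ}

theorem comp_iso (hf : IsGracefulOn H S f) (e : G ≃g H) : IsGracefulOn G S (f ∘ e) := by
  have hmap : Set.BijOn (Sym2.map e) G.edgeSet H.edgeSet :=
    ⟨fun _ hE => e.map_mem_edgeSet_iff.2 hE, (Sym2.map.injective e.injective).injOn,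
      fun E hE => ⟨E.map e.symm, e.symm.map_mem_edgeSet_iff.2 hE, by simp [Sym2.map_map]⟩⟩
  have hlabel : edgeLabel (f ∘ e) = edgeLabel f ∘ Sym2.map e := funext (Sym2.ind fun _ _ => rfl)
  exact ⟨hf.1.comp e.injective, fun v => hf.2.1 (e v), hlabel ▸ hf.2.2.comp hmap⟩

theorem isGraceful {m : ℕ} (hf : IsGracefulOn H (Set.Iic m) f) : IsGraceful H m f := by
  refine ⟨hf.1, hf.2.1, hf.2.2.injOn, ?_⟩
  rw [hf.2.2.image_eq]
  ext v
  simp only [Set.mem_sdiff, Set.mem_Iic, Set.mem_singleton_iff, Set.mem_Icc]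
  omega

theorem isNearGraceful {m : ℕ} (hf : IsGracefulOn H (Set.Iic (m + 1) \ {m}) f) :
    IsNearGraceful H m f := by
  refine ⟨hf.1, fun v => (hf.2.1 v).1, hf.2.2.injOn, Or.inr ?_⟩
  rw [hf.2.2.image_eq]
  ext v
  simp only [Set.mem_sdiff, Set.mem_Iic, Set.mem_singleton_iff, Set.mem_Icc]
  omega

end IsGracefulOn

namespace CyclicSnake

def labelRange (k : ℕ) : Set ℕ := {v | v ≤ 6 * k + k % 2 ∧ (k % 2 = 1 → v ≠ 6 * k)}

theorem labelRange_of_even {k : ℕ} (hk : Even k) : labelRange k = Set.Iic (6 * k) := by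
  have := Nat.even_iff.1 hk
  ext v; simp only [labelRange, Set.mem_ofPred_eq, Set.mem_Iic]; omega

theorem labelRange_of_odd {k : ℕ} (hk : Odd k) :
    labelRange k = Set.Iic (6 * k + 1) \ {6 * k} := by
  have := Nat.odd_iff.1 hk
  ext v
  simp only [labelRange, Set.mem_ofPred_eq, Set.mem_sdiff, Set.mem_Iic, Set.mem_singleton_iff]
  omega

def topOffsets (p : ℕ) : Finset ℕ := if p = 0 then {1, 2, 3, 4, 5, 7} else {0, 2, 3, 4, 5, 6}

theorem labelRange_succ_sdiff (k : ℕ) :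
    labelRange (k + 1) \ labelRange k = (6 * k + ·) '' topOffsets (k % 2) := by
  ext v
  rcases Nat.mod_two_eq_zero_or_one k with h | h <;>
    simp [labelRange, topOffsets, h] <;> omega

def cycleEdgeLabel (F : ℕ × ZMod 6 → ℕ) (p : ℕ × ZMod 6) : ℕ :=
  Nat.dist (F p) (F (p.1, p.2 + 1))

/-- `F (j, x)` labels vertex `x` of cycle `j`; vertex `0` of cycle `j + 1` is vertex `a j` of
cycle `j`, so injectivity is only asked on the positions that are not such duplicates. -/
structure IsSnakeLabelling (k : ℕ) (a : ℕ → ZMod 6) (i : ZMod 6) (F : ℕ × ZMod 6 → ℕ) :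
    Prop where
  glue : ∀ j, j + 1 < k → F (j, a j) = F (j + 1, 0)
  injOn : Set.InjOn F {p | p.1 < k ∧ (p.1 = 0 ∨ p.2 ≠ 0)}
  mapsTo : Set.MapsTo F {p | p.1 < k} (labelRange k)
  zero : F (k - 1, i) = 0
  bijOn : Set.BijOn (cycleEdgeLabel F) {p | p.1 < k} (labelRange k \ {0})

def oneCycleLabel : ZMod 6 → ℕ := ![0, 4, 1, 3, 2, 7]

theorem isSnakeLabelling_one (a : ℕ → ZMod 6) (i : ZMod 6) :
    IsSnakeLabelling 1 a i (fun p => oneCycleLabel (p.2 - i)) where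
  glue j hj := by omega
  injOn p hp q hq h := by
    have hinj : Function.Injective oneCycleLabel := by decide
    exact Prod.ext (by simp only [Set.mem_ofPred_eq] at hp hq; omega) (sub_left_inj.1 (hinj h))
  mapsTo p _ := by
    have : ∀ y, oneCycleLabel y ≤ 7 ∧ oneCycleLabel y ≠ 6 := by decide
    exact ⟨(this _).1, fun _ => (this _).2⟩
  zero := by simp [oneCycleLabel]
  bijOn := by
    have hdom : {p : ℕ × ZMod 6 | p.1 < 1} = {p | p.1 = 0} := by ext; simp
    have hT : labelRange 1 \ {0} = ↑({1, 2, 3, 4, 5, 7} : Finset ℕ) := by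
      ext v; simp [labelRange]; omega
    let δ : ZMod 6 → ℕ := fun y => Nat.dist (oneCycleLabel y) (oneCycleLabel (y + 1))
    have hδ : Set.BijOn δ Set.univ (labelRange 1 \ {0}) :=
      hT ▸ Set.bijOn_univ_of_image_eq (by decide) (by decide)
    rw [hdom]
    refine Set.bijOn_slice ((hδ.comp (Equiv.subRight i).bijective.bijOn_univ).congr fun x _ => ?_)
    simp [δ, cycleEdgeLabel, sub_add_eq_add_sub]

/-- A recipe for attaching a new cycle, by its vertex `0`, to a snake with `k` cycles and largest
label `M`: the old labels `v` become `v + shift`, or `M + shift - v` if `flip`; on the new cycle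
the vertices of one colour class get `offset x`, those of the other class `6 * k + offset x`. -/
structure Gadget where
  flip : Bool
  shift : ℕ
  offset : ZMod 6 → ℕ

namespace Gadget

variable (g : Gadget)

def isHigh (x : ZMod 6) : Bool := (x.val % 2 == 0) == g.flip

def label (N : ℕ) (x : ZMod 6) : ℕ := if g.isHigh x then N + g.offset x else g.offset x

def relabel (M v : ℕ) : ℕ := if g.flip then M + g.shift - v else v + g.shift

def edgeOffset (x : ZMod 6) : ℕ :=
  if g.isHigh x then g.offset x - g.offset (x + 1) else g.offset (x + 1) - g.offset x

/-- Conditions on a gadget, depending on `k` only through its parity `p`, under which it extends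
a labelling of a `k`-snake and puts the new `0` at `i`. In `fresh`, the exceptional cases are
the image of the label `6 * k`, which an odd snake leaves unused. -/
structure Valid (p : ℕ) (i : ZMod 6) : Prop where
  shift_le : g.shift ≤ 5
  offset_zero : g.offset 0 = g.shift + if g.flip then p else 0
  isHigh_eq_false : g.isHigh i = false
  offset_eq_zero : g.offset i = 0
  offset_inj : ∀ x y, g.isHigh x = g.isHigh y → g.offset x = g.offset y → x = y
  offset_lt_six : ∀ x, g.isHigh x = false → g.offset x < 6
  offset_le : ∀ x, g.isHigh x → g.offset x ≤ 7 - p ∧ (p = 0 → g.offset x ≠ 6)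
  fresh : ∀ x, x ≠ 0 → if g.isHigh x then
      p + g.shift < g.offset x ∨ (p = 1 ∧ g.flip = false ∧ g.offset x = g.shift)
    else g.offset x < g.shift ∨ (p = 1 ∧ g.flip = true ∧ g.offset x = g.shift + 1)
  offset_le_offset : ∀ x,
    if g.isHigh x then g.offset (x + 1) ≤ g.offset x else g.offset x ≤ g.offset (x + 1)
  edgeOffset_injective : Function.Injective g.edgeOffset
  image_edgeOffset : Finset.univ.image g.edgeOffset = topOffsets p

end Gadget

def gadget : ℕ → ℕ → Gadget
  | 0, 1 => ⟨true, 4, ![4, 0, 7, 2, 5, 3]⟩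
  | 0, 2 => ⟨false, 2, ![2, 7, 0, 4, 1, 3]⟩
  | 0, 3 => ⟨true, 3, ![3, 1, 4, 0, 7, 2]⟩
  | 0, 4 => ⟨false, 2, ![2, 3, 1, 4, 0, 7]⟩
  | 0, _ => ⟨true, 4, ![4, 3, 5, 2, 7, 0]⟩
  | _, 1 => ⟨true, 2, ![3, 0, 6, 1, 5, 3]⟩
  | _, 2 => ⟨false, 2, ![2, 2, 0, 6, 1, 5]⟩
  | _, 3 => ⟨true, 2, ![3, 1, 5, 0, 6, 3]⟩
  | _, 4 => ⟨false, 2, ![2, 5, 1, 6, 0, 2]⟩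
  | _, _ => ⟨true, 2, ![3, 3, 5, 1, 6, 0]⟩

theorem gadget_valid {p : ℕ} (hp : p < 2) {i : ZMod 6} (hi : i ≠ 0) :
    (gadget p i.val).Valid p i := by
  interval_cases p <;> fin_cases i <;> first | exact absurd rfl hi | constructor <;> decide

namespace Gadget

variable {g : Gadget}

theorem isHigh_add_one (x : ZMod 6) : g.isHigh (x + 1) = !g.isHigh x := by
  unfold isHigh; cases g.flip <;> revert x <;> decide

theorem dist_relabel {M u v : ℕ} (hu : u ≤ M) (hv : v ≤ M) :
    Nat.dist (g.relabel M u) (g.relabel M v) = Nat.dist u v := by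
  unfold relabel Nat.dist; split_ifs <;> omega

theorem relabel_injOn (M : ℕ) : Set.InjOn (g.relabel M) (Set.Iic M) := by
  intro u hu v hv h
  simp only [relabel, Set.mem_Iic] at *
  split_ifs at h <;> omega

section Valid

variable {k : ℕ} {i : ZMod 6} (hg : g.Valid (k % 2) i)
include hg

theorem Valid.label_zero_eq_relabel_zero :
    g.label (6 * k) 0 = g.relabel (6 * k + k % 2) 0 := by
  have h0 := hg.offset_zero
  have h : g.isHigh 0 = g.flip := by unfold isHigh; cases g.flip <;> rfl
  unfold label relabel
  cases hf : g.flip <;> simp only [h, hf, Bool.false_eq_true, ↓reduceIte] at h0 ⊢ <;> omega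

theorem Valid.label_eq_zero (N : ℕ) : g.label N i = 0 := by
  simp [label, hg.isHigh_eq_false, hg.offset_eq_zero]

theorem Valid.label_injective {N : ℕ} (hN : 6 ≤ N) : Function.Injective (g.label N) := by
  intro x y h
  have hx := hg.offset_lt_six x
  have hy := hg.offset_lt_six y
  unfold label at h
  cases hxh : g.isHigh x <;> cases hyh : g.isHigh y <;>
    simp only [hxh, hyh, Bool.false_eq_true, ↓reduceIte, forall_const] at h hx hy <;>
    first | exact hg.offset_inj x y (hxh.trans hyh.symm) (by omega) | omega

theorem Valid.label_ne_relabel {x : ZMod 6} (hx : x ≠ 0) {v : ℕ} (hv : v ∈ labelRange k) :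
    g.label (6 * k) x ≠ g.relabel (6 * k + k % 2) v := by
  have := hg.fresh x hx
  obtain ⟨hv, hv'⟩ := hv
  unfold label relabel
  cases hxh : g.isHigh x <;> cases hf : g.flip <;>
    simp only [hxh, hf, Bool.false_eq_true, Bool.true_eq_false, ↓reduceIte, true_and,
      false_and, and_false, or_false] at this ⊢ <;> omega

theorem Valid.relabel_mem {v : ℕ} (hv : v ∈ labelRange k) :
    g.relabel (6 * k + k % 2) v ∈ labelRange (k + 1) := by
  have := hg.shift_le
  obtain ⟨hv, -⟩ := hv
  unfold relabel labelRange
  split_ifs <;> simp only [Set.mem_ofPred_eq] <;> omega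

theorem Valid.label_mem (x : ZMod 6) : g.label (6 * k) x ∈ labelRange (k + 1) := by
  have := hg.offset_lt_six x
  have := hg.offset_le x
  unfold label labelRange
  cases h : g.isHigh x <;>
    simp only [h, Bool.false_eq_true, ↓reduceIte, Set.mem_ofPred_eq, forall_const] at * <;> omega

theorem Valid.dist_label (N : ℕ) (x : ZMod 6) :
    Nat.dist (g.label N x) (g.label N (x + 1)) = N + g.edgeOffset x := by
  have := hg.offset_le_offset x
  unfold label edgeOffset Nat.dist
  rw [isHigh_add_one]
  cases h : g.isHigh x <;>
    simp only [h, Bool.not_true, Bool.not_false, Bool.false_eq_true, ↓reduceIte] at * <;> omega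

theorem Valid.bijOn_dist_label :
    Set.BijOn (fun x => Nat.dist (g.label (6 * k) x) (g.label (6 * k) (x + 1))) Set.univ
      (labelRange (k + 1) \ labelRange k) := by
  rw [labelRange_succ_sdiff]
  simp_rw [hg.dist_label (6 * k)]
  exact ((add_right_injective _).injOn.bijOn_image).comp
    (Set.bijOn_univ_of_image_eq hg.edgeOffset_injective hg.image_edgeOffset)

end Valid

end Gadget

def extendLabel (k : ℕ) (F : ℕ × ZMod 6 → ℕ) (g : Gadget) (p : ℕ × ZMod 6) : ℕ :=
  if p.1 = k then g.label (6 * k) p.2 else g.relabel (6 * k + k % 2) (F p)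

namespace IsSnakeLabelling

variable {k : ℕ} {a : ℕ → ZMod 6} {F : ℕ × ZMod 6 → ℕ} {g : Gadget} {i : ZMod 6}

theorem apply_le (hF : IsSnakeLabelling k a i F) {p : ℕ × ZMod 6} (hp : p.1 < k) :
    F p ≤ 6 * k + k % 2 :=
  (hF.mapsTo hp).1

theorem bijOn_extendLabel {i₀ : ZMod 6} (hF : IsSnakeLabelling k a i₀ F)
    (hg : g.Valid (k % 2) i) :
    Set.BijOn (cycleEdgeLabel (extendLabel k F g)) {p | p.1 < k + 1}
      (labelRange (k + 1) \ {0}) := by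
  have hdom : {p : ℕ × ZMod 6 | p.1 < k + 1} = {p | p.1 < k} ∪ {p | p.1 = k} := by
    ext; simp only [Set.mem_ofPred_eq, Set.mem_union]; omega
  have hcod : labelRange (k + 1) \ {0} =
      (labelRange k \ {0}) ∪ (labelRange (k + 1) \ labelRange k) := by
    ext v; simp only [labelRange, Set.mem_ofPred_eq, Set.mem_sdiff, Set.mem_union,
      Set.mem_singleton_iff]; omega
  have hold : Set.BijOn (cycleEdgeLabel (extendLabel k F g)) {p | p.1 < k}
      (labelRange k \ {0}) :=
    hF.bijOn.congr fun p (hp : p.1 < k) => by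
      simp only [cycleEdgeLabel, extendLabel, hp.ne, ↓reduceIte]
      exact (g.dist_relabel (hF.apply_le hp) (hF.apply_le (p := (p.1, p.2 + 1)) hp)).symm
  have hnew : Set.BijOn (cycleEdgeLabel (extendLabel k F g)) {p | p.1 = k}
      (labelRange (k + 1) \ labelRange k) :=
    Set.bijOn_slice (hg.bijOn_dist_label.congr fun x _ => by simp [cycleEdgeLabel, extendLabel])
  rw [hdom, hcod]
  refine hold.union hnew ((Set.injOn_union ?_).2 ⟨hold.injOn, hnew.injOn, ?_⟩)
  · exact Set.disjoint_left.2 fun p (hp : p.1 < k) (hp' : p.1 = k) => by omega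
  · intro p hp q hq h
    have := hold.mapsTo hp
    have := hnew.mapsTo hq
    simp_all

theorem extend (hk : 1 ≤ k) (hF : IsSnakeLabelling k a (a (k - 1)) F) (hg : g.Valid (k % 2) i) :
    IsSnakeLabelling (k + 1) a i (extendLabel k F g) where
  glue j hj := by
    rcases Nat.lt_or_ge (j + 1) k with hj' | hj'
    · simp [extendLabel, show j ≠ k by omega, show j + 1 ≠ k by omega, hF.glue j hj']
    · obtain rfl : j = k - 1 := by omega
      simp [extendLabel, show k - 1 ≠ k by omega, show k - 1 + 1 = k by omega, hF.zero,
        hg.label_zero_eq_relabel_zero]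
  injOn p hp q hq h := by
    obtain ⟨hp, hp0⟩ := hp
    obtain ⟨hq, hq0⟩ := hq
    unfold extendLabel at h
    rcases eq_or_ne p.1 k with hpk | hpk <;> rcases eq_or_ne q.1 k with hqk | hqk <;>
      simp only [hpk, hqk, ↓reduceIte] at h
    · exact Prod.ext (hpk.trans hqk.symm) (hg.label_injective (by omega) h)
    · exact absurd h (hg.label_ne_relabel (hp0.resolve_left (by omega))
        (hF.mapsTo (show q.1 < k by omega)))
    · exact absurd h.symm (hg.label_ne_relabel (hq0.resolve_left (by omega))
        (hF.mapsTo (show p.1 < k by omega)))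
    · exact hF.injOn ⟨by omega, hp0⟩ ⟨by omega, hq0⟩ <| g.relabel_injOn _
        (hF.apply_le (by omega)) (hF.apply_le (by omega)) h
  mapsTo p (hp : p.1 < k + 1) := by
    unfold extendLabel
    split_ifs with hpk
    · exact hg.label_mem p.2
    · exact hg.relabel_mem (hF.mapsTo (show p.1 < k by omega))
  zero := by simp [extendLabel, hg.label_eq_zero]
  bijOn := hF.bijOn_extendLabel hg

end IsSnakeLabelling

theorem exists_isSnakeLabelling {k : ℕ} (hk : 1 ≤ k) {a : ℕ → ZMod 6}
    (ha : ∀ j, 0 < j → j + 1 < k → a j ≠ 0) {i : ZMod 6} (hi : k = 1 ∨ i ≠ 0) :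
    ∃ F, IsSnakeLabelling k a i F := by
  induction k, hk using Nat.le_induction generalizing i with
  | base => exact ⟨_, isSnakeLabelling_one a i⟩
  | succ k hk ih =>
    have hlast : k = 1 ∨ a (k - 1) ≠ 0 := by
      rcases eq_or_ne k 1 with h | h
      · exact .inl h
      · exact .inr (ha (k - 1) (by omega) (by omega))
    obtain ⟨F, hF⟩ := ih (fun j hj hjk => ha j hj (by omega)) hlast
    exact ⟨_, hF.extend hk (gadget_valid (k.mod_lt two_pos) (hi.resolve_left (by omega)))⟩

section SnakeGraph

variable {k : ℕ} {a : Fin k → ZMod 6}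

theorem exists_rep (X : Quotient (snakeSetoid k (fun _ => 6) a)) :
    ∃ p : Σ _ : Fin k, ZMod 6, (p.1.val = 0 ∨ p.2 ≠ 0) ∧
      Quotient.mk (snakeSetoid k (fun _ => 6) a) p = X := by
  induction X using Quotient.ind with | _ p
  obtain ⟨⟨j, hj⟩, x⟩ := p
  induction j generalizing x with
  | zero => exact ⟨_, .inl rfl, rfl⟩
  | succ j ih =>
    by_cases hx : x = 0
    · subst hx
      obtain ⟨q, hq, hqp⟩ := ih (a ⟨j, by omega⟩) (by omega)
      exact ⟨q, hq, hqp.trans (Quotient.sound (Relation.EqvGen.rel _ _ ⟨j, hj, rfl, rfl⟩))⟩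
    · exact ⟨_, .inr hx, rfl⟩

theorem exists_eq_of_mem_edgeSet {E : Sym2 (Quotient (snakeSetoid k (fun _ => 6) a))}
    (hE : E ∈ (snakeGraph k (fun _ => 6) a).edgeSet) :
    ∃ (j : Fin k) (x : ZMod 6),
      E = s(Quotient.mk _ ⟨j, x⟩, Quotient.mk _ ⟨j, x + 1⟩) := by
  induction E using Sym2.ind with | _ X Y
  obtain ⟨-, p, q, rfl, rfl, j, x, y, rfl, rfl, hxy | hxy⟩ := hE
  · exact ⟨j, x, by rw [hxy]⟩
  · exact ⟨j, y, by rw [hxy, Sym2.eq_swap]⟩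

theorem snakeGraph_adj_of_ne {j : Fin k} {x : ZMod 6}
    (h : Quotient.mk (snakeSetoid k (fun _ => 6) a) ⟨j, x⟩ ≠ Quotient.mk _ ⟨j, x + 1⟩) :
    (snakeGraph k (fun _ => 6) a).Adj (Quotient.mk _ ⟨j, x⟩) (Quotient.mk _ ⟨j, x + 1⟩) :=
  ⟨h, _, _, rfl, rfl, j, x, x + 1, rfl, rfl, .inl rfl⟩

namespace IsSnakeLabelling

variable {i : ZMod 6} {F : ℕ × ZMod 6 → ℕ}
  (hF : IsSnakeLabelling k (Function.extend Fin.val a 0) i F)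

def lift : Quotient (snakeSetoid k (fun _ => 6) a) → ℕ :=
  Quotient.lift (fun p => F (p.1.val, p.2)) <| Setoid.eqvGen_le (s := Setoid.ker _) <| by
    rintro _ _ ⟨j, hj, rfl, rfl⟩
    have h := hF.glue j hj
    rwa [Fin.val_injective.extend_apply a 0 ⟨j, Nat.lt_of_succ_lt hj⟩] at h

theorem edgeLabel_lift (j : Fin k) (x : ZMod 6) :
    edgeLabel hF.lift s(Quotient.mk _ ⟨j, x⟩, Quotient.mk _ ⟨j, x + 1⟩) =
      cycleEdgeLabel F (j, x) :=
  rfl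

theorem lift_injective : Function.Injective hF.lift := by
  intro X Y h
  obtain ⟨⟨j, x⟩, hp, rfl⟩ := exists_rep X
  obtain ⟨⟨j', x'⟩, hq, rfl⟩ := exists_rep Y
  obtain ⟨hj, rfl⟩ := Prod.mk.inj (hF.injOn ⟨j.isLt, hp⟩ ⟨j'.isLt, hq⟩ h)
  rw [show j = j' from Fin.ext hj]

theorem bijOn_edgeLabel_lift :
    Set.BijOn (edgeLabel hF.lift) (snakeGraph k (fun _ => 6) a).edgeSet (labelRange k \ {0}) := by
  refine ⟨fun E hE => ?_, fun E hE E' hE' h => ?_, fun v hv => ?_⟩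
  · obtain ⟨j, x, rfl⟩ := exists_eq_of_mem_edgeSet hE
    exact hF.edgeLabel_lift j x ▸ hF.bijOn.mapsTo j.isLt
  · obtain ⟨j, x, rfl⟩ := exists_eq_of_mem_edgeSet hE
    obtain ⟨j', x', rfl⟩ := exists_eq_of_mem_edgeSet hE'
    rw [edgeLabel_lift, edgeLabel_lift] at h
    obtain ⟨hj, rfl⟩ := Prod.mk.inj (hF.bijOn.injOn j.isLt j'.isLt h)
    rw [Fin.ext hj]
  · obtain ⟨⟨j, x⟩, hj, rfl⟩ := hF.bijOn.surjOn hv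
    refine ⟨_, snakeGraph_adj_of_ne (j := ⟨j, hj⟩) (x := x) fun h => hv.2 ?_,
      hF.edgeLabel_lift ⟨j, hj⟩ x⟩
    rw [cycleEdgeLabel, show F (j, x) = F (j, x + 1) from congrArg hF.lift h, Nat.dist_self]
    rfl

theorem isGracefulOn_lift : IsGracefulOn (snakeGraph k (fun _ => 6) a) (labelRange k) hF.lift :=
  ⟨hF.lift_injective, Quotient.ind fun p => hF.mapsTo p.1.isLt, hF.bijOn_edgeLabel_lift⟩

end IsSnakeLabelling

end SnakeGraph

end CyclicSnake

/-- For every `k ≥ 1`, every cyclic snake `kC_6` (with any string,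
given here by the concrete model `snakeGraph k (fun _ => 6) a`), and every prescribed
distance `d ∈ {1, 2, 3}`, there exists a labelling of `kC_6` that is graceful if `k` is
even and near graceful if `k` is odd, in which the label `0` is assigned to a vertex of
the last cycle lying at distance `d` from the last cut vertex (the cut vertex of the
last cycle being position `0` of cycle `k - 1`, and the vertex at cycle position `i`
lying at distance `min i (6 - i)` from it). -/
theorem stmt_11 (k : ℕ) (hk : 1 ≤ k) (a : Fin k → ZMod 6)
    (ha : ∀ j : Fin k, 0 < j.val → j.val + 1 < k → a j ≠ 0)
    (d : ℕ) (hd1 : 1 ≤ d) (hd3 : d ≤ 3)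
    (V : Type*) (G : SimpleGraph V)
    (e : G ≃g snakeGraph k (fun _ => 6) a) :
    ∃ (f : V → ℕ) (i : ZMod 6),
      min i.val (6 - i.val) = d ∧
      f (e.symm (Quotient.mk (snakeSetoid k (fun _ => 6) a) ⟨⟨k - 1, by omega⟩, i⟩)) = 0 ∧
      (Even k → IsGraceful G (6 * k) f) ∧
      (Odd k → IsNearGraceful G (6 * k) f) := by
  have hd : (d : ZMod 6).val = d := ZMod.val_cast_of_lt (by omega)
  have ha' (j : ℕ) (hj : 0 < j) (hjk : j + 1 < k) : Function.extend Fin.val a 0 j ≠ 0 := by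
    rw [Fin.val_injective.extend_apply a 0 ⟨j, by omega⟩]
    exact ha _ hj hjk
  have hd0 : (d : ZMod 6) ≠ 0 := fun h => by rw [h, ZMod.val_zero] at hd; omega
  obtain ⟨F, hF⟩ := CyclicSnake.exists_isSnakeLabelling hk ha' (.inr hd0)
  have hf := hF.isGracefulOn_lift.comp_iso e
  refine ⟨hF.lift ∘ e, d, by omega, ?_, fun he => ?_, fun ho => ?_⟩
  · rw [Function.comp_apply, RelIso.apply_symm_apply]
    exact hF.zero
  · exact (CyclicSnake.labelRange_of_even he ▸ hf).isGraceful
  · exact (CyclicSnake.labelRange_of_odd ho ▸ hf).isNearGraceful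
end
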